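/- arXiv:1501.07469 — 7 statements merged into one kernel-verified Lean document; each statement's English description precedes it below -/
import Mathlib

section
/- Every finite tree is 2-paintable: Mrs. Correct can win the paint game on any tree with 1 eraser at each vertex. -/
variable {V : Type*}

/-- `I` is an independent set in `G`. -/
def IndepIn (G : SimpleGraph V) (I : Finset V) : Prop :=
  ∀ u ∈ I, ∀ v ∈ I, ¬ G.Adj u v

/-- The paint game with fuel `n`: the set `A` of uncoloured vertices, with token
function `f`, can be fully coloured by Mrs. Correct within `n` rounds. -/
def PaintableAux [DecidableEq V] (G : SimpleGraph V) : ℕ → Finset V → (V → ℕ) → Prop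
  | 0, A, _ => A = ∅
  | n + 1, A, f => (∀ v ∈ A, 1 ≤ f v) ∧
      ∀ S ⊆ A, S.Nonempty → ∃ I ⊆ S, IndepIn G I ∧
        PaintableAux G n (A \ I) (fun v => if v ∈ S \ I then f v - 1 else f v)

/-- Mrs. Correct wins the paint game on the uncoloured vertex set `A` with token
function `f` (a vertex with `f v = k` can be erased `k - 1` times).  Since each round
strictly decreases the total number of tokens on uncoloured vertices, the game is
finite and this is equivalent to the usual inductive definition of paintability. -/
def Paintable [DecidableEq V] (G : SimpleGraph V) (A : Finset V) (f : V → ℕ) : Prop :=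
  ∃ n, PaintableAux G n A f

/-- `G` is `k`-paintable: Mrs. Correct wins with `k - 1` erasers at each vertex. -/
def IsPaintable [Fintype V] [DecidableEq V] (G : SimpleGraph V) (k : ℕ) : Prop :=
  Paintable G Finset.univ fun _ => k

/-- The paintability (on-line choice number) `χ_P`. -/
noncomputable def chiP [Fintype V] [DecidableEq V] (G : SimpleGraph V) : ℕ :=
  sInf {k | IsPaintable G k}

/-- The greedy top-down selection: `v` is selected iff `v ∈ S` and no "upper"
neighbour of `v` (one of strictly smaller depth) is selected. -/
def TopSel (G : SimpleGraph V) (d : V → ℕ) (S : Finset V) (v : V) : Prop :=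
  v ∈ S ∧ ∀ u, G.Adj u v → d u < d v → ¬ TopSel G d S u
termination_by d v

lemma topSel_iff (G : SimpleGraph V) (d : V → ℕ) (S : Finset V) (v : V) :
    TopSel G d S v ↔ v ∈ S ∧ ∀ u, G.Adj u v → d u < d v → ¬ TopSel G d S u := by
  rw [TopSel]

/-- Paintability of graphs admitting a depth function such that adjacent vertices have
distinct depths and each vertex has at most one neighbour of smaller depth. -/
lemma paint_of_depth [DecidableEq V] (G : SimpleGraph V) (d : V → ℕ)
    (hne : ∀ ⦃u v⦄, G.Adj u v → d u ≠ d v)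
    (huniq : ∀ ⦃v u₁ u₂⦄, G.Adj u₁ v → G.Adj u₂ v → d u₁ < d v → d u₂ < d v → u₁ = u₂) :
    ∀ n (A : Finset V) (f : V → ℕ), (∑ v ∈ A, f v) ≤ n →
      (∀ v ∈ A, 1 ≤ f v ∧ (f v = 1 → ∀ u, G.Adj u v → d u < d v → u ∉ A)) →
      PaintableAux G n A f := by
  intro n
  induction n with
  | zero =>
    intro A f hsum hinv
    show A = ∅
    by_contra hA
    obtain ⟨v, hv⟩ := Finset.nonempty_iff_ne_empty.mpr hA
    have h1 := (hinv v hv).1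
    have h2 : 1 ≤ ∑ v ∈ A, f v :=
      le_trans h1 (Finset.single_le_sum (fun i _ => Nat.zero_le _) hv)
    omega
  | succ n ih =>
    intro A f hsum hinv
    refine ⟨fun v hv => (hinv v hv).1, ?_⟩
    intro S hSA hSne
    classical
    set I : Finset V := S.filter (fun v => TopSel G d S v) with hIdef
    have hmemI : ∀ v, v ∈ I ↔ TopSel G d S v := by
      intro v
      rw [hIdef, Finset.mem_filter]
      exact ⟨fun h => h.2, fun h => ⟨((topSel_iff G d S v).1 h).1, h⟩⟩
    have hIS : I ⊆ S := by rw [hIdef]; exact Finset.filter_subset _ _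
    -- independence
    have hindep : IndepIn G I := by
      intro u hu v hv hadj
      have hdne := hne hadj
      rcases lt_or_gt_of_ne hdne with h | h
      · exact (((topSel_iff G d S v).1 ((hmemI v).1 hv)).2 u hadj h) ((hmemI u).1 hu)
      · exact (((topSel_iff G d S u).1 ((hmemI u).1 hu)).2 v hadj.symm h) ((hmemI v).1 hv)
    -- every unselected vertex of S has a selected upper neighbour
    have hcover : ∀ v ∈ S, v ∉ I → ∃ u, G.Adj u v ∧ d u < d v ∧ u ∈ I := by
      intro v hvS hvI
      have : ¬ TopSel G d S v := fun h => hvI ((hmemI v).2 h)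
      rw [topSel_iff] at this
      push_neg at this
      obtain ⟨u, hadj, hd, hsel⟩ := this hvS
      exact ⟨u, hadj, hd, (hmemI u).2 hsel⟩
    -- vertices of S with no upper neighbour in S are selected
    have hforced : ∀ v ∈ S, (∀ u, G.Adj u v → d u < d v → u ∉ S) → v ∈ I := by
      intro v hvS h
      refine (hmemI v).2 ((topSel_iff G d S v).2 ⟨hvS, fun u hadj hd hsel => ?_⟩)
      exact h u hadj hd (((topSel_iff G d S u).1 hsel).1)
    -- I is nonempty
    have hIne : I.Nonempty := by
      obtain ⟨v, hvS, hmin⟩ := S.exists_min_image d hSne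
      exact ⟨v, hforced v hvS (fun u hadj hd huS => absurd (hmin u huS) (by omega))⟩
    refine ⟨I, hIS, hindep, ih (A \ I) _ ?_ ?_⟩
    · -- sum bound
      have hIA : I ⊆ A := hIS.trans hSA
      have hsplit : (∑ v ∈ A \ I, f v) + ∑ v ∈ I, f v = ∑ v ∈ A, f v :=
        Finset.sum_sdiff hIA
      have hIone : 1 ≤ ∑ v ∈ I, f v := by
        obtain ⟨v, hv⟩ := hIne
        exact le_trans ((hinv v (hIA hv)).1)
          (Finset.single_le_sum (fun i _ => Nat.zero_le _) hv)
      have hpt : (∑ v ∈ A \ I, (if v ∈ S \ I then f v - 1 else f v)) ≤ ∑ v ∈ A \ I, f v :=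
        Finset.sum_le_sum (fun v _ => by split <;> omega)
      omega
    · -- invariant is preserved
      intro v hv
      rw [Finset.mem_sdiff] at hv
      obtain ⟨hvA, hvI⟩ := hv
      by_cases hvS : v ∈ S
      · obtain ⟨u₀, hadj₀, hd₀, hu₀I⟩ := hcover v hvS hvI
        have hu₀A : u₀ ∈ A := hSA (hIS hu₀I)
        have hf2 : 2 ≤ f v := by
          rcases Nat.lt_or_ge (f v) 2 with h | h
          · have h1 := (hinv v hvA).1
            have : f v = 1 := by omega
            exact absurd hu₀A ((hinv v hvA).2 this u₀ hadj₀ hd₀)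
          · exact h
        have hvSI : v ∈ S \ I := Finset.mem_sdiff.2 ⟨hvS, hvI⟩
        rw [if_pos hvSI]
        refine ⟨by omega, fun _ u hadj hd => ?_⟩
        have : u = u₀ := huniq hadj hadj₀ hd hd₀
        subst this
        simp [Finset.mem_sdiff, hu₀I]
      · have hvSI : v ∉ S \ I := fun h => hvS (Finset.mem_sdiff.1 h).1
        rw [if_neg hvSI]
        refine ⟨(hinv v hvA).1, fun h1 u hadj hd hu => ?_⟩
        exact (hinv v hvA).2 h1 u hadj hd (Finset.mem_sdiff.1 hu).1

/-- Every finite tree is 2-paintable: Mrs. Correct wins with 1 eraser at each vertex. -/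
theorem tree_two_paintable [Fintype V] [DecidableEq V] (G : SimpleGraph V)
    (hT : G.IsTree) : IsPaintable G 2 := by
  classical
  haveI : Nonempty V := hT.isConnected.nonempty
  set r := Classical.arbitrary V with hr
  choose P hP hPu using hT.existsUnique_path r
  set d : V → ℕ := fun v => (P v).length with hd
  have dich : ∀ u v (h : G.Adj u v),
      P v = (P u).concat h ∨ P u = (P v).concat h.symm := by
    intro u v h
    by_cases hv : v ∈ (P u).support
    · right
      have ht := (hP u).takeUntil hv
      have hdr := (hP u).dropUntil hv
      have e1 : (P u).takeUntil v hv = P v := hPu v _ ht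
      have e2 : (P u).dropUntil v hv = SimpleGraph.Walk.cons h.symm SimpleGraph.Walk.nil := by
        obtain ⟨q, hq, hqu⟩ := hT.existsUnique_path v u
        have hsingle : (SimpleGraph.Walk.cons h.symm SimpleGraph.Walk.nil : G.Walk v u).IsPath := by
          simp [SimpleGraph.Walk.isPath_def, h.ne']
        rw [hqu _ hdr, hqu _ hsingle]
      calc P u = ((P u).takeUntil v hv).append ((P u).dropUntil v hv) :=
            ((P u).take_spec hv).symm
        _ = (P v).append (SimpleGraph.Walk.cons h.symm SimpleGraph.Walk.nil) := by rw [e1, e2]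
        _ = (P v).concat h.symm := ((P v).concat_eq_append h.symm).symm
    · left
      have hpath : ((P u).concat h).IsPath := by
        rw [← SimpleGraph.Walk.isPath_reverse_iff, SimpleGraph.Walk.reverse_concat]
        exact ((hP u).reverse).cons (by simpa using hv)
      exact (hPu v _ hpath).symm
  have hlen : ∀ u v (h : G.Adj u v), P v = (P u).concat h → d v = d u + 1 := by
    intro u v h e
    have := congrArg SimpleGraph.Walk.length e
    simpa [hd, SimpleGraph.Walk.length_concat] using this
  have hne : ∀ ⦃u v⦄, G.Adj u v → d u ≠ d v := by
    intro u v h heq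
    rcases dich u v h with e | e
    · have := hlen u v h e; omega
    · have := hlen v u h.symm e; omega
  have huniq : ∀ ⦃v u₁ u₂⦄, G.Adj u₁ v → G.Adj u₂ v → d u₁ < d v → d u₂ < d v → u₁ = u₂ := by
    intro v u₁ u₂ h₁ h₂ hl₁ hl₂
    have e₁ : P v = (P u₁).concat h₁ := by
      rcases dich u₁ v h₁ with e | e
      · exact e
      · have := hlen v u₁ h₁.symm e; omega
    have e₂ : P v = (P u₂).concat h₂ := by
      rcases dich u₂ v h₂ with e | e
      · exact e
      · have := hlen v u₂ h₂.symm e; omega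
    obtain ⟨hv, -⟩ := SimpleGraph.Walk.concat_inj (e₁.symm.trans e₂)
    exact hv
  refine ⟨∑ v ∈ (Finset.univ : Finset V), 2,
    paint_of_depth G d hne huniq _ Finset.univ _ le_rfl ?_⟩
  intro v _
  exact ⟨one_le_two, fun h => by omega⟩
end

section
/- Every finite connected unicyclic graph (connected graph with exactly one cycle, i.e., with |E| = |V|) is 3-paintable: Mrs. Correct wins the paint game with 2 erasers at each vertex. -/
variable {V : Type*}

/-!
Order the vertices by their distance from a root `r`, breaking ties arbitrarily. Every vertex
other than `r` has a neighbour closer to `r`, hence at least one earlier neighbour, while `r` has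
none; since the numbers of earlier neighbours add up to `|E| = |V|`, no vertex has more than two.
A graph admitting an ordering in which every vertex `v` has fewer than `f v` earlier neighbours is
`f`-paintable: in each round Mrs. Correct colours the greedy independent subset of the marked set
`S` in that order, so every vertex of `S` she does not colour loses, together with a token, an
earlier neighbour that is still uncoloured.
-/

open Finset

section Greedy

variable {α : Type*} [LinearOrder α] (G : SimpleGraph V) [DecidableRel G.Adj] (rank : V → α)

def lowerNeighbors (A : Finset V) (v : V) : Finset V :=
  {u ∈ A | G.Adj u v ∧ rank u < rank v}

variable {G rank}

lemma lowerNeighbors_mono {A B : Finset V} (h : A ⊆ B) (v : V) :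
    lowerNeighbors G rank A v ⊆ lowerNeighbors G rank B v :=
  filter_subset_filter _ h

lemma card_lowerNeighbors_sdiff_lt [DecidableEq V] {A I : Finset V} {u v : V} (huA : u ∈ A)
    (huI : u ∈ I) (hadj : G.Adj u v) (hlt : rank u < rank v) :
    #(lowerNeighbors G rank (A \ I) v) < #(lowerNeighbors G rank A v) := by
  refine card_lt_card ((ssubset_iff_of_subset (lowerNeighbors_mono sdiff_subset v)).2 ⟨u, ?_, ?_⟩)
  · exact mem_filter.2 ⟨huA, hadj, hlt⟩
  · exact fun hu => (mem_sdiff.1 (mem_filter.1 hu).1).2 huI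

lemma exists_indepIn_dominating [DecidableEq V] (hrank : Function.Injective rank) (S : Finset V) :
    ∃ I ⊆ S, IndepIn G I ∧ ∀ v ∈ S \ I, ∃ u ∈ I, G.Adj u v ∧ rank u < rank v := by
  induction S using Finset.strongInduction with
  | H S ih =>
  obtain rfl | hS := S.eq_empty_or_nonempty
  · exact ⟨∅, subset_rfl, by simp [IndepIn], by simp⟩
  obtain ⟨m, hmS, hmin⟩ := S.exists_min_image rank hS
  obtain ⟨J, hJT, hJ, hdom⟩ := ih {v ∈ S | v ≠ m ∧ ¬ G.Adj m v}
    ((ssubset_iff_of_subset (filter_subset _ _)).2 ⟨m, hmS, by simp⟩)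
  have hJS : J ⊆ S := hJT.trans (filter_subset _ _)
  have hmJ : ∀ w ∈ J, ¬ G.Adj m w := fun w hw => (mem_filter.1 (hJT hw)).2.2
  refine ⟨insert m J, insert_subset hmS hJS, ?_, ?_⟩
  · intro u hu w hw
    rw [mem_insert] at hu hw
    rcases hu with rfl | hu <;> rcases hw with rfl | hw
    · exact G.loopless.irrefl _
    · exact hmJ _ hw
    · exact fun h => hmJ _ hu h.symm
    · exact hJ _ hu _ hw
  · intro v hv
    obtain ⟨hvS, hvI⟩ := mem_sdiff.1 hv
    obtain ⟨hvm, hvJ⟩ := not_or.1 (mt mem_insert.2 hvI)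
    by_cases hmv : G.Adj m v
    · exact ⟨m, mem_insert_self m J, hmv, (hmin v hvS).lt_of_ne (hrank.ne (Ne.symm hvm))⟩
    · obtain ⟨u, huJ, hadj, hlt⟩ := hdom v (mem_sdiff.2 ⟨mem_filter.2 ⟨hvS, hvm, hmv⟩, hvJ⟩)
      exact ⟨u, mem_insert_of_mem huJ, hadj, hlt⟩

lemma paintableAux_of_card_lowerNeighbors_lt [DecidableEq V] (hrank : Function.Injective rank) :
    ∀ (n : ℕ) (A : Finset V) (f : V → ℕ), #A ≤ n →
      (∀ v ∈ A, #(lowerNeighbors G rank A v) < f v) → PaintableAux G n A f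
  | 0, A, _, hA, _ => card_eq_zero.1 (Nat.le_zero.1 hA)
  | n + 1, A, f, hA, hf => by
    refine ⟨fun v hv => Nat.one_le_of_lt (hf v hv), fun S hSA hS => ?_⟩
    obtain ⟨I, hIS, hI, hdom⟩ := exists_indepIn_dominating (G := G) hrank S
    have hIne : I.Nonempty := by
      obtain ⟨v, hv⟩ := hS
      by_cases hvI : v ∈ I
      · exact ⟨v, hvI⟩
      · obtain ⟨u, hu, -⟩ := hdom v (mem_sdiff.2 ⟨hv, hvI⟩)
        exact ⟨u, hu⟩
    refine ⟨I, hIS, hI, paintableAux_of_card_lowerNeighbors_lt hrank n _ _ ?_ ?_⟩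
    · have := card_lt_card (sdiff_ssubset (hIS.trans hSA) hIne)
      omega
    · intro v hv
      have hold := hf v (mem_sdiff.1 hv).1
      split_ifs with hvS
      · obtain ⟨u, huI, hadj, hlt⟩ := hdom v hvS
        have := card_lowerNeighbors_sdiff_lt (hSA (hIS huI)) huI hadj hlt
        omega
      · exact (card_le_card (lowerNeighbors_mono sdiff_subset v)).trans_lt hold

lemma paintable_of_card_lowerNeighbors_lt [DecidableEq V] (hrank : Function.Injective rank)
    {A : Finset V} {f : V → ℕ} (hf : ∀ v ∈ A, #(lowerNeighbors G rank A v) < f v) :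
    Paintable G A f :=
  ⟨#A, paintableAux_of_card_lowerNeighbors_lt hrank _ A f le_rfl hf⟩

lemma sum_card_lowerNeighbors_univ [Fintype V] (hrank : Function.Injective rank) :
    ∑ v, #(lowerNeighbors G rank univ v) = #G.edgeFinset := by
  rw [← card_sigma]
  refine card_bij (fun p _ => s(p.2, p.1)) ?_ ?_ ?_
  · rintro ⟨v, u⟩ h
    simp only [mem_sigma, lowerNeighbors, mem_filter] at h
    exact G.mem_edgeFinset.2 h.2.2.1
  · rintro ⟨v, u⟩ h ⟨v', u'⟩ h' he
    simp only [mem_sigma, lowerNeighbors, mem_filter] at h h'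
    rcases Sym2.eq_iff.1 he with ⟨rfl, rfl⟩ | ⟨rfl, rfl⟩
    · rfl
    · exact absurd h.2.2.2 h'.2.2.2.asymm
  · intro e he
    induction e using Sym2.ind with
    | h a b =>
    have hab : G.Adj a b := G.mem_edgeFinset.1 he
    rcases (hrank.ne (G.ne_of_adj hab)).lt_or_gt with h | h
    · exact ⟨⟨b, a⟩, by simp [lowerNeighbors, hab, h], rfl⟩
    · exact ⟨⟨a, b⟩, by simp [lowerNeighbors, hab.symm, h], Sym2.eq_swap⟩

end Greedy

lemma SimpleGraph.Reachable.exists_adj_dist_lt {G : SimpleGraph V} {r v : V}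
    (h : G.Reachable r v) (hrv : r ≠ v) : ∃ u, G.Adj u v ∧ G.dist r u < G.dist r v := by
  obtain ⟨p, hp⟩ := h.symm.exists_walk_length_eq_dist
  cases p with
  | nil => exact absurd rfl hrv
  | cons hadj q =>
    refine ⟨_, hadj.symm, ?_⟩
    rw [G.dist_comm, G.dist_comm (u := r), ← hp, SimpleGraph.Walk.length_cons]
    exact Nat.lt_succ_of_le (SimpleGraph.dist_le q)

section DistRank

variable [Fintype V] (G : SimpleGraph V) (r : V)

noncomputable def distRank (v : V) : ℕ ×ₗ Fin (Fintype.card V) :=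
  toLex (G.dist r v, Fintype.equivFin V v)

lemma distRank_injective : Function.Injective (distRank G r) := fun _ _ h =>
  (Fintype.equivFin V).injective (Prod.ext_iff.1 (toLex.injective h)).2

variable {G r}

lemma distRank_lt_of_dist_lt {u v : V} (h : G.dist r u < G.dist r v) :
    distRank G r u < distRank G r v :=
  Prod.Lex.toLex_lt_toLex.2 (Or.inl h)

variable [DecidableRel G.Adj]

lemma lowerNeighbors_distRank_self : lowerNeighbors G (distRank G r) univ r = ∅ := by
  refine filter_eq_empty_iff.2 fun u _ ⟨hadj, hlt⟩ => hlt.not_gt (distRank_lt_of_dist_lt ?_)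
  rw [SimpleGraph.dist_self, SimpleGraph.dist_eq_one_iff_adj.2 hadj.symm]
  exact Nat.one_pos

lemma card_lowerNeighbors_distRank_pos (hconn : G.Connected) {v : V} (hv : v ≠ r) :
    0 < #(lowerNeighbors G (distRank G r) univ v) := by
  obtain ⟨u, hadj, hlt⟩ := (hconn r v).exists_adj_dist_lt (Ne.symm hv)
  exact card_pos.2 ⟨u, mem_filter.2 ⟨mem_univ u, hadj, distRank_lt_of_dist_lt hlt⟩⟩

end DistRank

lemma le_two_of_sum_le_card {ι : Type*} [Fintype ι] {f : ι → ℕ} {r : ι}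
    (hsum : ∑ i, f i ≤ Fintype.card ι) (hr : f r = 0) (hpos : ∀ i ≠ r, 0 < f i) (i : ι) :
    f i ≤ 2 := by
  classical
  rcases eq_or_ne i r with rfl | hir
  · omega
  have hrest : #((univ.erase r).erase i) ≤ ∑ j ∈ (univ.erase r).erase i, f j :=
    (card_eq_sum_ones _).trans_le <|
      sum_le_sum fun j hj => hpos j (ne_of_mem_erase (mem_of_mem_erase hj))
  have hsplit : f i + ∑ j ∈ (univ.erase r).erase i, f j = ∑ j, f j := by
    rw [add_sum_erase _ _ (mem_erase.2 ⟨hir, mem_univ i⟩), sum_erase _ hr]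
  have hcard : #((univ.erase r).erase i) + 1 + 1 = Fintype.card ι := by
    rw [card_erase_add_one (mem_erase.2 ⟨hir, mem_univ i⟩), card_erase_add_one (mem_univ r),
      card_univ]
  omega

/-- Every finite connected unicyclic graph (connected with `|E| = |V|`) is
3-paintable: Mrs. Correct wins with 2 erasers at each vertex. -/
theorem unicyclic_three_paintable [Fintype V] [DecidableEq V] (G : SimpleGraph V)
    [DecidableRel G.Adj] (hconn : G.Connected)
    (huni : G.edgeFinset.card = Fintype.card V) : IsPaintable G 3 := by
  obtain ⟨r⟩ := hconn.nonempty
  have hsum : ∑ v, #(lowerNeighbors G (distRank G r) univ v) ≤ Fintype.card V :=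
    (sum_card_lowerNeighbors_univ (distRank_injective G r)).trans_le huni.le
  refine paintable_of_card_lowerNeighbors_lt (distRank_injective G r) fun v _ => ?_
  have := le_two_of_sum_le_card hsum (by rw [lowerNeighbors_distRank_self, card_empty])
    (fun _ hv => card_lowerNeighbors_distRank_pos hconn hv) v
  omega
end

section
/- If every component of a finite graph G is a tree or a unicyclic graph, then χ_P(G) ≤ 3. -/
variable {V : Type*}

/-! If every component spans at most as many edges as vertices, then so does every vertex set `B`
inside a component `C`: by connectivity, each vertex of `C \ B` accounts for an edge of `C` not
inside `B`. By the degree-sum formula every nonempty vertex set therefore contains a vertex with at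
most two neighbours in it, so the vertices can be ordered with at most two earlier neighbours each.
In each round Mrs. Correct colours the independent set chosen greedily along this order among the
marked vertices. Every marked vertex left uncoloured has an earlier neighbour that was just
coloured, so the number of its uncoloured earlier neighbours stays below its remaining tokens. -/

open Finset

namespace SimpleGraph

variable {G : SimpleGraph V}

theorem edgeSet_spanningCoe_induce (s : Set V) :
    (G.induce s).spanningCoe.edgeSet = G.edgeSet ∩ s.sym2 := by
  ext e
  induction e using Sym2.ind with
  | _ a b => simp

theorem sum_card_filter_adj_eq_two_mul_ncard [Fintype V] [DecidableRel G.Adj] (B : Finset V) :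
    ∑ v ∈ B, #{u ∈ B | G.Adj v u} = 2 * (G.edgeSet ∩ (B : Set V).sym2).ncard := by
  classical
  set H := (G.induce (B : Set V)).spanningCoe
  have hdeg : ∀ v, H.degree v = if v ∈ B then #{u ∈ B | G.Adj v u} else 0 := by
    intro v
    rw [← card_neighborFinset_eq_degree]
    split_ifs with hv
    · congr 1; ext u; simp [H, hv, and_comm]
    · rw [card_eq_zero, eq_empty_iff_forall_notMem]; simp [H, hv]
  rw [← edgeSet_spanningCoe_induce, ← coe_edgeFinset, Set.ncard_coe_finset,
    ← sum_degrees_eq_twice_card_edges, Finset.sum_congr rfl fun v _ => hdeg v, sum_ite_mem,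
    univ_inter]

theorem ncard_edgeSet_inter_sym2_add_ncard_diff_le [Finite V] {C : G.ConnectedComponent}
    {B : Set V} (hB : B ⊆ C.supp) (hne : B.Nonempty) :
    (G.edgeSet ∩ B.sym2).ncard + (C.supp \ B).ncard ≤ (G.edgeSet ∩ C.supp.sym2).ncard := by
  induction hn : (C.supp \ B).ncard generalizing B with
  | zero =>
    obtain rfl : B = C.supp :=
      hB.antisymm (Set.sdiff_eq_empty.mp ((Set.ncard_eq_zero (Set.toFinite _)).mp hn))
    simp
  | succ n ih =>
    obtain ⟨y, hyC, hyB⟩ : (C.supp \ B).Nonempty := Set.nonempty_of_ncard_ne_zero (by omega)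
    obtain ⟨b, hb⟩ := hne
    obtain ⟨⟨⟨b, x⟩, hbx⟩, -, hbB, hxB⟩ :=
      (C.reachable_of_mem_supp (hB hb) hyC).some.exists_boundary_dart B hb hyB
    have hxC : x ∈ C.supp := C.mem_supp_of_adj_mem_supp (hB hbB) hbx
    have hcard : (C.supp \ insert x B).ncard = n := by
      rw [Set.insert_eq, Set.union_comm, ← Set.sdiff_sdiff,
        Set.ncard_sdiff_singleton_of_mem (Set.mem_sdiff_of_mem hxC hxB), hn, Nat.add_sub_cancel]
    have hlt : (G.edgeSet ∩ B.sym2).ncard < (G.edgeSet ∩ (insert x B).sym2).ncard := by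
      refine Set.ncard_lt_ncard ⟨fun e ⟨he, heB⟩ => ⟨he, ?_⟩, fun hsup => ?_⟩ (Set.toFinite _)
      · exact Set.mem_sym2_iff_subset.mpr
          ((Set.mem_sym2_iff_subset.mp heB).trans (Set.subset_insert _ _))
      · have hbx' : s(b, x) ∈ G.edgeSet ∩ (insert x B).sym2 :=
          ⟨hbx, Set.mk_mem_sym2_iff.mpr ⟨Set.mem_insert_of_mem _ hbB, Set.mem_insert _ _⟩⟩
        exact hxB (Set.mk_mem_sym2_iff.mp (hsup hbx').2).2
    have := ih (Set.insert_subset hxC hB) (Set.insert_nonempty _ _) hcard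
    omega

theorem ncard_edgeSet_inter_sym2_le_of_subset_supp [Finite V] {C : G.ConnectedComponent}
    (hC : (G.edgeSet ∩ C.supp.sym2).ncard ≤ C.supp.ncard) {B : Set V} (hB : B ⊆ C.supp) :
    (G.edgeSet ∩ B.sym2).ncard ≤ B.ncard := by
  rcases B.eq_empty_or_nonempty with rfl | hne
  · simp
  have := ncard_edgeSet_inter_sym2_add_ncard_diff_le hB hne
  have := Set.ncard_sdiff_add_ncard_of_subset hB
  omega

theorem exists_card_filter_adj_le_two [Fintype V] [DecidableRel G.Adj]
    (h : ∀ C : G.ConnectedComponent, (G.edgeSet ∩ C.supp.sym2).ncard ≤ C.supp.ncard)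
    {A : Finset V} (hA : A.Nonempty) : ∃ v ∈ A, #{u ∈ A | G.Adj v u} ≤ 2 := by
  classical
  obtain ⟨a, ha⟩ := hA
  set C := G.connectedComponentMk a
  set B := {u ∈ A | u ∈ C.supp}
  have hBC : (B : Set V) ⊆ C.supp := fun u hu => (mem_filter.mp hu).2
  have hsparse : ∑ v ∈ B, #{u ∈ B | G.Adj v u} ≤ ∑ v ∈ B, 2 := by
    rw [sum_card_filter_adj_eq_two_mul_ncard, sum_const, smul_eq_mul, mul_comm]
    have := ncard_edgeSet_inter_sym2_le_of_subset_supp (h C) hBC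
    rw [Set.ncard_coe_finset] at this
    omega
  have haB : a ∈ B := mem_filter.mpr ⟨ha, rfl⟩
  obtain ⟨v, hvB, hv⟩ := exists_le_of_sum_le ⟨a, haB⟩ hsparse
  refine ⟨v, (mem_filter.mp hvB).1, ?_⟩
  have hvC : v ∈ C.supp := hBC hvB
  have hnbrs : {u ∈ A | G.Adj v u} = {u ∈ B | G.Adj v u} := by
    ext u
    simp only [B, mem_filter]
    exact ⟨fun hu => ⟨⟨hu.1, C.mem_supp_of_adj_mem_supp hvC hu.2⟩, hu.2⟩, fun hu => ⟨hu.1.1, hu.2⟩⟩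
  rwa [hnbrs]

theorem exists_injOn_card_filter_adj_lt_le [DecidableRel G.Adj] {k : ℕ}
    (h : ∀ B : Finset V, B.Nonempty → ∃ v ∈ B, #{u ∈ B | G.Adj v u} ≤ k) (A : Finset V) :
    ∃ ord : V → ℕ, Set.InjOn ord A ∧ ∀ v ∈ A, #{u ∈ A | G.Adj v u ∧ ord u < ord v} ≤ k := by
  classical
  induction A using Finset.strongInduction with
  | H A ih =>
  rcases A.eq_empty_or_nonempty with rfl | hA
  · exact ⟨0, by simp, by simp⟩
  obtain ⟨v, hvA, hv⟩ := h A hA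
  obtain ⟨ord, hinj, hord⟩ := ih (A.erase v) (erase_ssubset hvA)
  set N := (A.erase v).sup ord + 1
  have hlt : ∀ u ∈ A.erase v, ord u < N := fun u hu => Nat.lt_succ_of_le (le_sup hu)
  refine ⟨Function.update ord v N, ?_, fun w hw => ?_⟩
  · intro x hx y hy hxy
    simp only [Function.update_apply] at hxy
    split_ifs at hxy with hxv hyv hyv
    · exact hxv.trans hyv.symm
    · exact absurd hxy.symm (hlt y (mem_erase.mpr ⟨hyv, hy⟩)).ne
    · exact absurd hxy (hlt x (mem_erase.mpr ⟨hxv, hx⟩)).ne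
    · exact hinj (mem_erase.mpr ⟨hxv, hx⟩) (mem_erase.mpr ⟨hyv, hy⟩) hxy
  by_cases hwv : w = v
  · subst hwv
    exact (card_le_card (monotone_filter_right _ fun _ _ hu => hu.1)).trans hv
  refine (card_le_card fun u hu => ?_).trans (hord w (mem_erase.mpr ⟨hwv, hw⟩))
  simp only [mem_filter, Function.update_apply, if_neg hwv] at hu
  split_ifs at hu with huv
  · exact absurd hu.2.2 (hlt w (mem_erase.mpr ⟨hwv, hw⟩)).asymm
  · exact mem_filter.mpr ⟨mem_erase.mpr ⟨huv, hu.1⟩, hu.2⟩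

theorem exists_indepIn_forall_exists_adj_lt [DecidableEq V] {ord : V → ℕ} {S : Finset V}
    (hord : Set.InjOn ord S) :
    ∃ I ⊆ S, IndepIn G I ∧ ∀ v ∈ S \ I, ∃ u ∈ I, G.Adj v u ∧ ord u < ord v := by
  induction S using Finset.induction_on_max_value ord with
  | empty => exact ⟨∅, subset_rfl, by simp [IndepIn], by simp⟩
  | insert a S haS hmax ih =>
    have hlt : ∀ u ∈ S, ord u < ord a := fun u hu => (hmax u hu).lt_of_ne fun h =>
      haS (hord (mem_insert_of_mem hu) (mem_insert_self a S) h ▸ hu)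
    obtain ⟨I, hIS, hI, hdom⟩ := ih (hord.mono (by simp))
    by_cases ha : ∃ u ∈ I, G.Adj a u
    · refine ⟨I, hIS.trans (subset_insert a S), hI, fun v hv => ?_⟩
      rcases mem_insert.mp (mem_sdiff.mp hv).1 with rfl | hvS
      · obtain ⟨u, huI, hau⟩ := ha
        exact ⟨u, huI, hau, hlt u (hIS huI)⟩
      · exact hdom v (mem_sdiff.mpr ⟨hvS, (mem_sdiff.mp hv).2⟩)
    · push Not at ha
      refine ⟨insert a I, insert_subset_insert a hIS, ?_, fun v hv => ?_⟩
      · intro u hu w hw huw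
        rcases mem_insert.mp hu with hua | hu <;> rcases mem_insert.mp hw with hwa | hw
        · exact G.irrefl (hua ▸ hwa ▸ huw)
        · exact ha w hw (hua ▸ huw)
        · exact ha u hu (hwa ▸ huw).symm
        · exact hI u hu w hw huw
      · obtain ⟨hv, hvI⟩ := mem_sdiff.mp hv
        obtain ⟨u, huI, hvu, hu⟩ := hdom v (by simp_all)
        exact ⟨u, mem_insert_of_mem huI, hvu, hu⟩

theorem paintableAux_of_card_filter_adj_lt [DecidableEq V] [DecidableRel G.Adj] {ord : V → ℕ} :
    ∀ {n : ℕ} {A : Finset V} {f : V → ℕ}, #A ≤ n → Set.InjOn ord A →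
      (∀ v ∈ A, #{u ∈ A | G.Adj v u ∧ ord u < ord v} < f v) → PaintableAux G n A f
  | 0, _, _, hA, _, _ => card_eq_zero.mp (Nat.le_zero.mp hA)
  | n + 1, A, f, hA, hord, hf => by
    refine ⟨fun v hv => Nat.one_le_of_lt (hf v hv), fun S hSA hS => ?_⟩
    obtain ⟨I, hIS, hI, hdom⟩ := exists_indepIn_forall_exists_adj_lt (G := G) (hord.mono hSA)
    have hIne : I.Nonempty := by
      obtain ⟨v, hv⟩ := hS
      by_cases hvI : v ∈ I
      · exact ⟨v, hvI⟩
      · obtain ⟨u, huI, -⟩ := hdom v (mem_sdiff.mpr ⟨hv, hvI⟩)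
        exact ⟨u, huI⟩
    refine ⟨I, hIS, hI, paintableAux_of_card_filter_adj_lt ?_ (hord.mono sdiff_subset) ?_⟩
    · have := card_lt_card (sdiff_ssubset (hIS.trans hSA) hIne)
      omega
    intro v hv
    obtain ⟨hvA, hvI⟩ := mem_sdiff.mp hv
    have hfv := hf v hvA
    have hsub : ∀ w ∈ I, {u ∈ A \ I | G.Adj v u ∧ ord u < ord v} ⊆
        {u ∈ A | G.Adj v u ∧ ord u < ord v}.erase w := fun w hw u hu => by
      simp only [mem_filter, mem_sdiff] at hu
      exact mem_erase.mpr ⟨fun h => hu.1.2 (h ▸ hw), mem_filter.mpr ⟨hu.1.1, hu.2⟩⟩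
    split_ifs with hvS
    · obtain ⟨u, huI, hvu, hu⟩ := hdom v hvS
      have hu : u ∈ {u ∈ A | G.Adj v u ∧ ord u < ord v} :=
        mem_filter.mpr ⟨hIS.trans hSA huI, hvu, hu⟩
      calc _ ≤ _ := card_le_card (hsub u huI)
        _ = _ := card_erase_of_mem hu
        _ < f v - 1 := Nat.sub_lt_sub_right (card_pos.mpr ⟨u, hu⟩) hfv
    · obtain ⟨u, huI⟩ := hIne
      exact (card_le_card (hsub u huI)).trans_lt ((card_erase_le).trans_lt hfv)

theorem isPaintable_succ_of_forall_exists_card_filter_adj_le [Fintype V] [DecidableEq V]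
    [DecidableRel G.Adj] {k : ℕ}
    (h : ∀ B : Finset V, B.Nonempty → ∃ v ∈ B, #{u ∈ B | G.Adj v u} ≤ k) :
    IsPaintable G (k + 1) := by
  obtain ⟨ord, hord, hback⟩ := exists_injOn_card_filter_adj_lt_le h univ
  exact ⟨_, paintableAux_of_card_filter_adj_lt le_rfl hord fun v hv =>
    Nat.lt_succ_of_le (hback v hv)⟩

end SimpleGraph

/-- If every connected component of a finite graph `G` is a tree or unicyclic
(i.e., spans at most as many edges as vertices), then `χ_P(G) ≤ 3`. -/
theorem chiP_le_three_of_components_unicyclic [Fintype V] [DecidableEq V]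
    (G : SimpleGraph V)
    (h : ∀ C : G.ConnectedComponent,
      {e : Sym2 V | e ∈ G.edgeSet ∧ ∀ v ∈ e, v ∈ C.supp}.ncard ≤ C.supp.ncard) :
    chiP G ≤ 3 := by
  classical
  have hsparse (C : G.ConnectedComponent) :
      (G.edgeSet ∩ C.supp.sym2).ncard ≤ C.supp.ncard := by
    convert h C using 3
    ext e
    simp [Set.mem_sym2_iff_subset, Set.subset_def]
  exact Nat.sInf_le <| SimpleGraph.isPaintable_succ_of_forall_exists_card_filter_adj_le
    fun _ hB => SimpleGraph.exists_card_filter_adj_le_two hsparse hB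
end

section
/- Let G be a finite graph and let H ⊆ V(G) be a set of vertices such that the induced subgraph G[H] is k-paintable, and let every vertex outside H have degree at most d in G. Then χ_P(G) ≤ max(k, d + 1). -/
variable {V : Type*}

lemma exists_maximal_indep_extend [DecidableEq V] (G : SimpleGraph V) (W I0 : Finset V)
    (h0 : IndepIn G I0) :
    ∃ I, I0 ⊆ I ∧ I ⊆ I0 ∪ W ∧ IndepIn G I ∧
      ∀ v ∈ W, v ∉ I → ∃ u ∈ I, G.Adj u v := by
  classical
  obtain ⟨I, hImem, hImax⟩ := Finset.exists_max_image
      (((I0 ∪ W).powerset).filter (fun J => I0 ⊆ J ∧ IndepIn G J)) Finset.card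
      ⟨I0, by
        simp only [Finset.mem_filter, Finset.mem_powerset]
        exact ⟨Finset.subset_union_left, subset_rfl, h0⟩⟩
  simp only [Finset.mem_filter, Finset.mem_powerset] at hImem
  obtain ⟨hIsub, hI0I, hIind⟩ := hImem
  refine ⟨I, hI0I, hIsub, hIind, ?_⟩
  intro v hvW hvI
  by_contra hno
  push_neg at hno
  have hins : insert v I ∈ ((I0 ∪ W).powerset).filter (fun J => I0 ⊆ J ∧ IndepIn G J) := by
    simp only [Finset.mem_filter, Finset.mem_powerset]
    refine ⟨Finset.insert_subset (Finset.mem_union_right _ hvW) hIsub,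
      hI0I.trans (Finset.subset_insert _ _), ?_⟩
    intro a ha b hb
    rcases Finset.mem_insert.1 ha with ha' | ha'
    · rcases Finset.mem_insert.1 hb with hb' | hb'
      · subst ha'; subst hb'; exact G.irrefl
      · subst ha'; intro hadj; exact hno b hb' hadj.symm
    · rcases Finset.mem_insert.1 hb with hb' | hb'
      · subst hb'; exact hno a ha'
      · exact hIind a ha' b hb'
  have := hImax _ hins
  rw [Finset.card_insert_of_notMem hvI] at this
  omega

instance decMemCoe [DecidableEq V] (H : Finset V) :
    DecidablePred (fun v : V => v ∈ (H : Set V)) :=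
  fun v => decidable_of_iff (v ∈ H) (by simp)

lemma paintable_key [Fintype V] [DecidableEq V] (G : SimpleGraph V) [DecidableRel G.Adj] (H : Finset V) :
    ∀ N n (A : Finset V) (f : V → ℕ) (g : ↥(H : Set V) → ℕ),
      n + (A \ H).card ≤ N →
      PaintableAux (G.induce (H : Set V)) n (A.subtype (fun v => v ∈ (H : Set V))) g →
      (∀ v (hv : v ∈ (H : Set V)), v ∈ A → g ⟨v, hv⟩ ≤ f v) →
      (∀ v ∈ A, v ∉ H → (G.neighborFinset v ∩ A).card + 1 ≤ f v) →
      PaintableAux G N A f := by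
  intro N
  induction N with
  | zero =>
    intro n A f g hm hsm hfg hdeg
    have hn : n = 0 := by omega
    have hAH : A \ H = ∅ := Finset.card_eq_zero.1 (by omega)
    subst hn
    have hsub : A.subtype (fun v => v ∈ (H : Set V)) = ∅ := hsm
    show A = ∅
    rw [Finset.eq_empty_iff_forall_notMem]
    intro v hv
    have hvH : v ∈ H := by
      by_contra h
      have : v ∈ A \ H := Finset.mem_sdiff.2 ⟨hv, h⟩
      simp [hAH] at this
    have hmem : (⟨v, by simpa using hvH⟩ : ↥(H : Set V)) ∈
        A.subtype (fun v => v ∈ (H : Set V)) := Finset.mem_subtype.2 hv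
    simp [hsub] at hmem
  | succ N ih =>
    intro n A f g hm hsm hfg hdeg
    refine ⟨?_, ?_⟩
    · -- tokens at least 1
      intro v hv
      by_cases hvH : v ∈ H
      · have hmem : (⟨v, by simpa using hvH⟩ : ↥(H : Set V)) ∈
            A.subtype (fun v => v ∈ (H : Set V)) := Finset.mem_subtype.2 hv
        cases n with
        | zero =>
          have hsub : A.subtype (fun v => v ∈ (H : Set V)) = ∅ := hsm
          simp [hsub] at hmem
        | succ n' =>
          exact le_trans (hsm.1 _ hmem) (hfg v (by simpa using hvH) hv)
      · have := hdeg v hv hvH; omega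
    · -- accept a presented set S
      intro S hS hSne
      set p : V → Prop := (fun v : V => v ∈ (H : Set V)) with hp
      set S' : Finset ↥(H : Set V) := S.subtype p with hS'def
      by_cases hS' : S'.Nonempty
      · -- the presented set meets H: use one round of the small game
        cases n with
        | zero =>
          exfalso
          have hsub : A.subtype p = ∅ := hsm
          obtain ⟨x, hx⟩ := hS'
          have : x ∈ A.subtype p := Finset.subtype_mono hS hx
          simp [hsub] at this
        | succ n' =>
          obtain ⟨I', hI'S, hI'ind, hrec⟩ := hsm.2 S' (Finset.subtype_mono hS) hS'
          set I0 : Finset V := I'.image Subtype.val with hI0def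
          have hI0ind : IndepIn G I0 := by
            intro a ha b hb
            simp only [hI0def, Finset.mem_image] at ha hb
            obtain ⟨a', ha', rfl⟩ := ha
            obtain ⟨b', hb', rfl⟩ := hb
            exact hI'ind a' ha' b' hb'
          obtain ⟨I, hI0I, hIsub, hIind, hIdom⟩ :=
            exists_maximal_indep_extend G (S \ H) I0 hI0ind
          have hI0S : I0 ⊆ S := by
            intro x hx
            simp only [hI0def, Finset.mem_image] at hx
            obtain ⟨x', hx', rfl⟩ := hx
            exact Finset.mem_subtype.1 (hI'S hx')
          have hIS : I ⊆ S := hIsub.trans (Finset.union_subset hI0S Finset.sdiff_subset)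
          -- correspondence between I and I' on H
          have hcorr : ∀ (v : V) (hv : v ∈ (H : Set V)), v ∈ I ↔ (⟨v, hv⟩ : ↥(H : Set V)) ∈ I' := by
            intro v hv
            constructor
            · intro hvI
              have : v ∈ I0 := by
                rcases Finset.mem_union.1 (hIsub hvI) with h | h
                · exact h
                · exact absurd (show v ∈ H by simpa using hv) (Finset.mem_sdiff.1 h).2
              simp only [hI0def, Finset.mem_image] at this
              obtain ⟨x', hx', hval⟩ := this
              have : x' = ⟨v, hv⟩ := Subtype.ext hval
              rwa [this] at hx'
            · intro hvI'
              exact hI0I (by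
                simp only [hI0def, Finset.mem_image]
                exact ⟨⟨v, hv⟩, hvI', rfl⟩)
          refine ⟨I, hIS, hIind, ?_⟩
          apply ih n' (A \ I) _ (fun x => if x ∈ S' \ I' then g x - 1 else g x)
          · -- measure
            have hsub2 : (A \ I) \ H ⊆ A \ H :=
              Finset.sdiff_subset_sdiff Finset.sdiff_subset subset_rfl
            have := Finset.card_le_card hsub2
            omega
          · -- small game state
            have heq : (A \ I).subtype p = (A.subtype p) \ I' := by
              ext x
              simp only [Finset.mem_subtype, Finset.mem_sdiff]
              constructor
              · rintro ⟨hxA, hxI⟩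
                exact ⟨hxA, fun hxI' => hxI ((hcorr x.1 x.2).2 (by simpa [Subtype.eta] using hxI'))⟩
              · rintro ⟨hxA, hxI'⟩
                exact ⟨hxA, fun hxI => hxI' (by simpa [Subtype.eta] using (hcorr x.1 x.2).1 hxI)⟩
            rw [heq]
            exact hrec
          · -- token comparison on H
            intro v hv hvA
            have hvAI := Finset.mem_sdiff.1 hvA
            have hvH : v ∈ H := by simpa using hv
            by_cases hvS : v ∈ S
            · have hvnotI : v ∉ I := hvAI.2
              have hv1 : (⟨v, hv⟩ : ↥(H : Set V)) ∈ S' \ I' := by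
                refine Finset.mem_sdiff.2 ⟨Finset.mem_subtype.2 hvS, ?_⟩
                intro h
                exact hvnotI ((hcorr v hv).2 h)
              have hv2 : v ∈ S \ I := Finset.mem_sdiff.2 ⟨hvS, hvnotI⟩
              simp only [hv1, hv2, if_pos]
              have := hfg v hv hvAI.1
              omega
            · have hv1 : (⟨v, hv⟩ : ↥(H : Set V)) ∉ S' \ I' := by
                intro h
                exact hvS (Finset.mem_subtype.1 (Finset.mem_sdiff.1 h).1)
              have hv2 : v ∉ S \ I := by
                intro h
                exact hvS (Finset.mem_sdiff.1 h).1
              simp only [hv1, hv2, if_neg, not_false_iff]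
              exact hfg v hv hvAI.1
          · -- degree condition outside H
            intro v hvA hvH
            have hvAI := Finset.mem_sdiff.1 hvA
            by_cases hvS : v ∈ S
            · obtain ⟨u, huI, huadj⟩ := hIdom v (Finset.mem_sdiff.2 ⟨hvS, hvH⟩) hvAI.2
              have huA : u ∈ A := hS (hIS huI)
              have huN : u ∈ G.neighborFinset v ∩ A :=
                Finset.mem_inter.2 ⟨(SimpleGraph.mem_neighborFinset _ _ _).2 huadj.symm, huA⟩
              have hsub3 : G.neighborFinset v ∩ (A \ I) ⊆ (G.neighborFinset v ∩ A).erase u := by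
                intro x hx
                have hx' := Finset.mem_inter.1 hx
                have hxAI := Finset.mem_sdiff.1 hx'.2
                refine Finset.mem_erase.2 ⟨?_, Finset.mem_inter.2 ⟨hx'.1, hxAI.1⟩⟩
                rintro rfl
                exact hxAI.2 huI
              have hc1 := Finset.card_le_card hsub3
              have hc2 : ((G.neighborFinset v ∩ A).erase u).card
                  = (G.neighborFinset v ∩ A).card - 1 := Finset.card_erase_of_mem huN
              have hc3 : 1 ≤ (G.neighborFinset v ∩ A).card := Finset.card_pos.2 ⟨u, huN⟩
              have hdegv := hdeg v hvAI.1 hvH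
              have hvSI : v ∈ S \ I := Finset.mem_sdiff.2 ⟨hvS, hvAI.2⟩
              simp only [hvSI, if_pos]
              omega
            · have hvSI : v ∉ S \ I := fun h => hvS (Finset.mem_sdiff.1 h).1
              simp only [hvSI, if_neg, not_false_iff]
              have hsub3 : G.neighborFinset v ∩ (A \ I) ⊆ G.neighborFinset v ∩ A :=
                Finset.inter_subset_inter subset_rfl Finset.sdiff_subset
              have := Finset.card_le_card hsub3
              have := hdeg v hvAI.1 hvH
              omega
      · -- the presented set is disjoint from H
        have hSH : ∀ v ∈ S, v ∉ H := by
          intro v hvS hvH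
          exact hS' ⟨⟨v, by simpa using hvH⟩, Finset.mem_subtype.2 hvS⟩
        have h0 : IndepIn G (∅ : Finset V) := by intro u hu; simp at hu
        obtain ⟨I, _, hIsub, hIind, hIdom⟩ := exists_maximal_indep_extend G S ∅ h0
        have hIS : I ⊆ S := by simpa using hIsub
        have hIne : I.Nonempty := by
          obtain ⟨v, hv⟩ := hSne
          by_cases hvI : v ∈ I
          · exact ⟨v, hvI⟩
          · obtain ⟨u, huI, _⟩ := hIdom v hv hvI
            exact ⟨u, huI⟩
        have hIAH : I ⊆ A \ H := fun x hx => Finset.mem_sdiff.2 ⟨hS (hIS hx), hSH x (hIS hx)⟩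
        refine ⟨I, hIS, hIind, ?_⟩
        apply ih n (A \ I) _ g
        · -- measure
          have heq : (A \ I) \ H = (A \ H) \ I := by
            ext x; simp only [Finset.mem_sdiff]; tauto
          rw [heq, Finset.card_sdiff_of_subset hIAH]
          have h1 := Finset.card_pos.2 hIne
          have h2 := Finset.card_le_card hIAH
          omega
        · -- small game state unchanged
          have heq : (A \ I).subtype p = A.subtype p := by
            ext x
            simp only [Finset.mem_subtype, Finset.mem_sdiff]
            constructor
            · rintro ⟨hxA, _⟩; exact hxA
            · intro hx
              exact ⟨hx, fun hxI => hSH x.1 (hIS hxI) (by simpa using x.2)⟩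
          rw [heq]
          exact hsm
        · intro v hv hvA
          have hvH : v ∈ H := by simpa using hv
          have hvS : v ∉ S := fun h => hSH v h hvH
          have hv2 : v ∉ S \ I := fun h => hvS (Finset.mem_sdiff.1 h).1
          simp only [hv2, if_neg, not_false_iff]
          exact hfg v hv (Finset.mem_sdiff.1 hvA).1
        · intro v hvA hvH
          have hvAI := Finset.mem_sdiff.1 hvA
          by_cases hvS : v ∈ S
          · obtain ⟨u, huI, huadj⟩ := hIdom v hvS hvAI.2
            have huA : u ∈ A := hS (hIS huI)
            have huN : u ∈ G.neighborFinset v ∩ A :=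
              Finset.mem_inter.2 ⟨(SimpleGraph.mem_neighborFinset _ _ _).2 huadj.symm, huA⟩
            have hsub3 : G.neighborFinset v ∩ (A \ I) ⊆ (G.neighborFinset v ∩ A).erase u := by
              intro x hx
              have hx' := Finset.mem_inter.1 hx
              have hxAI := Finset.mem_sdiff.1 hx'.2
              refine Finset.mem_erase.2 ⟨?_, Finset.mem_inter.2 ⟨hx'.1, hxAI.1⟩⟩
              rintro rfl
              exact hxAI.2 huI
            have hc1 := Finset.card_le_card hsub3
            have hc2 : ((G.neighborFinset v ∩ A).erase u).card
                = (G.neighborFinset v ∩ A).card - 1 := Finset.card_erase_of_mem huN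
            have hc3 : 1 ≤ (G.neighborFinset v ∩ A).card := Finset.card_pos.2 ⟨u, huN⟩
            have hdegv := hdeg v hvAI.1 hvH
            have hvSI : v ∈ S \ I := Finset.mem_sdiff.2 ⟨hvS, hvAI.2⟩
            simp only [hvSI, if_pos]
            omega
          · have hvSI : v ∉ S \ I := fun h => hvS (Finset.mem_sdiff.1 h).1
            simp only [hvSI, if_neg, not_false_iff]
            have hsub3 : G.neighborFinset v ∩ (A \ I) ⊆ G.neighborFinset v ∩ A :=
              Finset.inter_subset_inter subset_rfl Finset.sdiff_subset
            have := Finset.card_le_card hsub3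
            have := hdeg v hvAI.1 hvH
            omega

/-- If the subgraph induced on `H` is `k`-paintable and every vertex outside `H`
has degree at most `d` in `G`, then `χ_P(G) ≤ max k (d + 1)`. -/
theorem chiP_le_max_of_induced_paintable [Fintype V] [DecidableEq V]
    (G : SimpleGraph V) [DecidableRel G.Adj] (H : Finset V) (k d : ℕ)
    (hH : IsPaintable (G.induce (H : Set V)) k)
    (hd : ∀ v ∉ H, G.degree v ≤ d) :
    chiP G ≤ max k (d + 1) := by
  obtain ⟨n, hn⟩ := hH
  have huniv : (Finset.univ : Finset V).subtype (fun v => v ∈ (H : Set V)) = Finset.univ := by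
    ext x; simp
  have key := paintable_key G H (n + (Finset.univ \ H).card) n Finset.univ
      (fun _ => max k (d + 1)) (fun _ => k) le_rfl (by rw [huniv]; exact hn)
      (fun v hv _ => le_max_left _ _) ?_
  · exact Nat.sInf_le ⟨n + (Finset.univ \ H).card, key⟩
  · intro v _ hvH
    rw [Finset.inter_univ]
    have h1 : (G.neighborFinset v).card ≤ d := hd v hvH
    calc (G.neighborFinset v).card + 1 ≤ d + 1 := by omega
      _ ≤ max k (d + 1) := le_max_right _ _
end

section
/- If G is a graph which is not L-list-colourable for some assignment L of colour lists of size k to its vertices, then Mr. Paint wins the paint game with k−1 erasers per vertex; that is, χ_L(G) ≤ χ_P(G). -/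
variable {V : Type*}

/-!
Mr. Paint turns any list assignment into a strategy: pick a colour `x` still in some list of an
uncoloured vertex and present the set `S` of uncoloured vertices whose list contains `x`. Mrs.
Correct's answer `I ⊆ S` is independent, so its vertices may all receive colour `x`; removing `x`
from the remaining lists costs every vertex of `S \ I` exactly the token it loses, so the invariant
"tokens ≤ list size" survives the round. A winning strategy for Mrs. Correct therefore colours the
graph from the lists, by induction on the length of the game.
-/

open Finset

section ListColoring

variable {α : Type*}

def IsListColoringOn (G : SimpleGraph V) (A : Finset V) (L : V → Finset α) (c : V → α) : Prop :=
  (∀ v ∈ A, c v ∈ L v) ∧ ∀ u ∈ A, ∀ v ∈ A, G.Adj u v → c u ≠ c v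

lemma isListColoringOn_empty (G : SimpleGraph V) (L : V → Finset α) (c : V → α) :
    IsListColoringOn G ∅ L c := by
  simp [IsListColoringOn]

lemma IsListColoringOn.ite_of_indepIn [DecidableEq V] [DecidableEq α] {G : SimpleGraph V}
    {A I : Finset V} {L : V → Finset α} {c : V → α} {x : α}
    (hc : IsListColoringOn G (A \ I) (fun v => (L v).erase x) c)
    (hI : IndepIn G I) (hxI : ∀ v ∈ I, x ∈ L v) :
    IsListColoringOn G A L fun v => if v ∈ I then x else c v := by
  obtain ⟨hcL, hcAdj⟩ := hc
  have mem_rest : ∀ v ∈ A, v ∉ I → c v ∈ (L v).erase x := fun v hv hvI =>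
    hcL v (mem_sdiff.mpr ⟨hv, hvI⟩)
  refine ⟨fun v hv => ?_, fun u hu v hv hadj => ?_⟩
  · by_cases hvI : v ∈ I
    · simpa [hvI] using hxI v hvI
    · simpa [hvI] using mem_of_mem_erase (mem_rest v hv hvI)
  · by_cases huI : u ∈ I <;> by_cases hvI : v ∈ I <;> simp only [huI, hvI, if_true, if_false]
    · exact absurd hadj (hI u huI v hvI)
    · exact fun h => notMem_erase x (L v) (h ▸ mem_rest v hv hvI)
    · exact fun h => notMem_erase x (L u) (h ▸ mem_rest u hu huI)
    · exact hcAdj u (mem_sdiff.mpr ⟨hu, huI⟩) v (mem_sdiff.mpr ⟨hv, hvI⟩) hadj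

lemma ite_pred_le_card_erase [DecidableEq V] [DecidableEq α] {T : Finset V} {L : V → Finset α}
    {f : V → ℕ} {v : V} {x : α} (hf : f v ≤ #(L v)) (hxT : x ∈ L v → v ∈ T) :
    (if v ∈ T then f v - 1 else f v) ≤ #((L v).erase x) := by
  by_cases hx : x ∈ L v
  · rw [if_pos (hxT hx), card_erase_of_mem hx]
    omega
  · rw [erase_eq_of_notMem hx]
    split_ifs <;> omega

theorem PaintableAux.exists_isListColoringOn [DecidableEq V] [DecidableEq α] [Nonempty α]
    {G : SimpleGraph V} {n : ℕ} {A : Finset V} {f : V → ℕ} (h : PaintableAux G n A f)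
    (L : V → Finset α) (hf : ∀ v ∈ A, f v ≤ #(L v)) :
    ∃ c, IsListColoringOn G A L c := by
  induction n generalizing A f L with
  | zero =>
    rw [PaintableAux] at h
    exact ⟨fun _ => Classical.arbitrary α, h ▸ isListColoringOn_empty G L _⟩
  | succ n ih =>
    obtain ⟨hpos, hmove⟩ := h
    obtain rfl | ⟨v₀, hv₀⟩ := A.eq_empty_or_nonempty
    · exact ⟨fun _ => Classical.arbitrary α, isListColoringOn_empty G L _⟩
    obtain ⟨x, hx⟩ : (L v₀).Nonempty := card_pos.mp (by linarith [hpos v₀ hv₀, hf v₀ hv₀])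
    set S := A.filter (x ∈ L ·)
    obtain ⟨I, hIS, hI, hrest⟩ :=
      hmove S (filter_subset _ _) ⟨v₀, mem_filter.mpr ⟨hv₀, hx⟩⟩
    have hf' : ∀ v ∈ A \ I,
        (if v ∈ S \ I then f v - 1 else f v) ≤ #((L v).erase x) := fun v hv =>
      have ⟨hvA, hvI⟩ := mem_sdiff.mp hv
      ite_pred_le_card_erase (hf v hvA) fun hxv => by simp [S, hvA, hvI, hxv]
    obtain ⟨c, hc⟩ := ih hrest _ hf'
    exact ⟨_, hc.ite_of_indepIn hI fun v hv => (mem_filter.mp (hIS hv)).2⟩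

end ListColoring

/-- If `G` is `k`-paintable then `G` is `k`-choosable: for every assignment of
lists of size `k` there is a proper colouring from the lists.  (Equivalently, if
some list assignment of size `k` admits no proper colouring, then Mr. Paint wins
the paint game with `k - 1` erasers per vertex; that is, `χ_L(G) ≤ χ_P(G)`.) -/
theorem choosable_of_paintable [Fintype V] [DecidableEq V] (G : SimpleGraph V)
    (k : ℕ) (hpaint : IsPaintable G k) :
    ∀ L : V → Finset ℕ, (∀ v, (L v).card = k) →
      ∃ c : V → ℕ, (∀ v, c v ∈ L v) ∧ ∀ u v, G.Adj u v → c u ≠ c v := by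
  intro L hL
  obtain ⟨n, hn⟩ := hpaint
  obtain ⟨c, hcL, hcAdj⟩ := hn.exists_isListColoringOn L fun v _ => (hL v).ge
  exact ⟨c, fun v => hcL v (mem_univ v), fun u v => hcAdj u (mem_univ u) v (mem_univ v)⟩
end

section
/- For every graph G on n ≥ 2 vertices, χ_P(G) ≤ χ(G)·⌈log n⌉ + 1, where log is the natural logarithm. -/
variable {V : Type*}

lemma paintableAux_succ [DecidableEq V] (G : SimpleGraph V) :
    ∀ (n : ℕ) (A : Finset V) (f : V → ℕ), PaintableAux G n A f → PaintableAux G (n+1) A f := by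
  intro n
  induction n with
  | zero =>
    intro A f h
    simp only [PaintableAux] at h
    subst h
    refine ⟨fun v hv => absurd hv (Finset.notMem_empty v), fun S hS hne => ?_⟩
    exact absurd (Finset.subset_empty.mp hS) hne.ne_empty
  | succ n ih =>
    intro A f h
    obtain ⟨h1, h2⟩ := h
    refine ⟨h1, fun S hS hne => ?_⟩
    obtain ⟨I, hIS, hind, hp⟩ := h2 S hS hne
    exact ⟨I, hIS, hind, ih _ _ hp⟩

lemma paintableAux_mono [DecidableEq V] (G : SimpleGraph V) {n m : ℕ} (h : n ≤ m)
    (A : Finset V) (f : V → ℕ) (hp : PaintableAux G n A f) : PaintableAux G m A f := by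
  induction h with
  | refl => exact hp
  | step _ ih => exact paintableAux_succ G _ _ _ ih

lemma edgeless_paintableAux [DecidableEq V] (G : SimpleGraph V)
    (hE : ∀ u v, ¬ G.Adj u v) :
    ∀ (m : ℕ) (A : Finset V) (f : V → ℕ), A.card ≤ m → (∀ v ∈ A, 1 ≤ f v) →
      PaintableAux G m A f := by
  intro m
  induction m with
  | zero =>
    intro A f hcard _
    exact Finset.card_eq_zero.mp (Nat.le_zero.mp hcard)
  | succ m ih =>
    intro A f hcard hf
    refine ⟨hf, fun S hS hne => ⟨S, subset_rfl, fun u _ v _ => hE u v, ?_⟩⟩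
    have hSS : S \ S = ∅ := Finset.sdiff_self S
    have hfun : (fun v => if v ∈ S \ S then f v - 1 else f v) = f := by
      funext v
      simp [hSS]
    rw [hfun]
    refine ih _ _ ?_ (fun v hv => hf v (Finset.mem_sdiff.mp hv).1)
    have h1 : 1 ≤ S.card := Finset.card_pos.mpr hne
    have := Finset.card_sdiff_of_subset hS
    omega

lemma key_paintableAux [DecidableEq V] {c : ℕ} (G : SimpleGraph V)
    (col : G.Coloring (Fin c)) (hc2 : 2 ≤ c) :
    ∀ (m : ℕ) (A : Finset V) (f : V → ℕ), A.card ≤ m →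
      (∑ v ∈ A, (1 - 1/(c:ℝ)) ^ f v) < 1 → PaintableAux G m A f := by
  set q : ℝ := 1 - 1/(c:ℝ) with hq
  have hcr : (2:ℝ) ≤ (c:ℝ) := by exact_mod_cast hc2
  have hc0 : (0:ℝ) < (c:ℝ) := by linarith
  have hq0 : 0 < q := by
    rw [hq]
    have : 1/(c:ℝ) ≤ 1/2 := by
      apply div_le_div_of_nonneg_left <;> linarith
    linarith
  have hq1 : q < 1 := by
    rw [hq]
    have : 0 < 1/(c:ℝ) := by positivity
    linarith
  intro m
  induction m with
  | zero =>
    intro A f hcard _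
    exact Finset.card_eq_zero.mp (Nat.le_zero.mp hcard)
  | succ m ih =>
    intro A f hcard hsum
    have hfA : ∀ v ∈ A, 1 ≤ f v := by
      intro v hv
      by_contra hfv
      have hfv0 : f v = 0 := by omega
      have h1 : (1:ℝ) ≤ ∑ v ∈ A, q ^ f v := by
        have := Finset.single_le_sum (f := fun v => q ^ f v)
          (fun w _ => le_of_lt (pow_pos hq0 (f w))) hv
        simpa [hfv0] using this
      linarith
    refine ⟨hfA, fun S hS hne => ?_⟩
    -- weight of a colour class within S
    set w : Fin c → ℝ := fun i => ∑ v ∈ S.filter (fun v => col v = i), q ^ f v with hw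
    have hfib : ∑ i : Fin c, w i = ∑ v ∈ S, q ^ f v :=
      Finset.sum_fiberwise S col (fun v => q ^ f v)
    have hcpos : 0 < c := by omega
    have : Nonempty (Fin c) := ⟨⟨0, hcpos⟩⟩
    obtain ⟨i0, -, hmax⟩ := Finset.exists_max_image Finset.univ w Finset.univ_nonempty
    set I : Finset V := S.filter (fun v => col v = i0) with hI
    have hIS : I ⊆ S := Finset.filter_subset _ _
    have hSpos : 0 < ∑ v ∈ S, q ^ f v :=
      Finset.sum_pos (fun v _ => pow_pos hq0 (f v)) hne
    have hboundS : ∑ v ∈ S, q ^ f v ≤ (c:ℝ) * w i0 := by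
      rw [← hfib]
      calc ∑ i : Fin c, w i ≤ ∑ _i : Fin c, w i0 :=
            Finset.sum_le_sum (fun i _ => hmax i (Finset.mem_univ i))
        _ = (c:ℝ) * w i0 := by simp [mul_comm]
    have hwpos : 0 < w i0 := by
      by_contra hle
      push_neg at hle
      nlinarith
    have hInon : I.Nonempty := by
      by_contra hIe
      rw [Finset.not_nonempty_iff_eq_empty] at hIe
      rw [hw] at hwpos
      simp only [← hI, hIe, Finset.sum_empty] at hwpos
      linarith
    refine ⟨I, hIS, ?_, ?_⟩
    · intro u hu v hv hadj
      have hu' := (Finset.mem_filter.mp hu).2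
      have hv' := (Finset.mem_filter.mp hv).2
      exact col.valid hadj (hu'.trans hv'.symm)
    · -- apply induction hypothesis
      apply ih
      · have h1 : 1 ≤ I.card := Finset.card_pos.mpr hInon
        have := Finset.card_sdiff_of_subset (hIS.trans hS)
        omega
      · -- the new weight sum is at most the old one
        have hsplit : A \ I = (A \ S) ∪ (S \ I) := by
          ext v
          simp only [Finset.mem_sdiff, Finset.mem_union]
          constructor
          · rintro ⟨hvA, hvI⟩
            by_cases hvS : v ∈ S
            · exact Or.inr ⟨hvS, hvI⟩
            · exact Or.inl ⟨hvA, hvS⟩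
          · rintro (⟨hvA, hvS⟩ | ⟨hvS, hvI⟩)
            · exact ⟨hvA, fun hvI => hvS (hIS hvI)⟩
            · exact ⟨hS hvS, hvI⟩
        have hdisj : Disjoint (A \ S) (S \ I) := by
          apply Finset.disjoint_left.mpr
          intro v hv hv'
          exact (Finset.mem_sdiff.mp hv).2 (Finset.mem_sdiff.mp hv').1
        set f' : V → ℕ := fun v => if v ∈ S \ I then f v - 1 else f v with hf'
        have hnew : ∑ v ∈ A \ I, q ^ f' v
            = ∑ v ∈ A \ S, q ^ f v + ∑ v ∈ S \ I, q ^ (f v - 1) := by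
          rw [hsplit, Finset.sum_union hdisj]
          congr 1
          · apply Finset.sum_congr rfl
            intro v hv
            have h' : v ∉ S \ I := Finset.disjoint_left.mp hdisj hv
            show q ^ (if v ∈ S \ I then f v - 1 else f v) = q ^ f v
            rw [if_neg h']
          · apply Finset.sum_congr rfl
            intro v hv
            show q ^ (if v ∈ S \ I then f v - 1 else f v) = q ^ (f v - 1)
            rw [if_pos hv]
        -- old sum decomposition
        have holdA : ∑ v ∈ A, q ^ f v = ∑ v ∈ A \ S, q ^ f v + ∑ v ∈ S, q ^ f v := by
          rw [← Finset.sum_sdiff hS]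
        have holdS : ∑ v ∈ S, q ^ f v = ∑ v ∈ S \ I, q ^ f v + ∑ v ∈ I, q ^ f v := by
          rw [← Finset.sum_sdiff hIS]
        -- key inequality: ∑_{S\I} q^{f v - 1} ≤ ∑_{S\I} q^{f v} + ∑_I q^{f v}
        have hpt : ∀ v ∈ S \ I, q ^ (f v - 1) * q = q ^ f v := by
          intro v hv
          have hv1 : 1 ≤ f v := hfA v (hS (Finset.mem_sdiff.mp hv).1)
          obtain ⟨k, hk⟩ : ∃ k, f v = k + 1 := ⟨f v - 1, by omega⟩
          rw [hk]
          simp [pow_succ]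
        have hTq : (∑ v ∈ S \ I, q ^ (f v - 1)) * q = ∑ v ∈ S \ I, q ^ f v := by
          rw [Finset.sum_mul]
          exact Finset.sum_congr rfl hpt
        set T : ℝ := ∑ v ∈ S \ I, q ^ f v with hT
        set T' : ℝ := ∑ v ∈ S \ I, q ^ (f v - 1) with hT'
        have hwI : w i0 = ∑ v ∈ I, q ^ f v := by rw [hw, hI]
        -- T ≤ (c-1) * w i0
        have hTbound : T ≤ ((c:ℝ) - 1) * w i0 := by
          have : T + w i0 ≤ (c:ℝ) * w i0 := by
            rw [hT, hwI, ← holdS]; exact hboundS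
          linarith
        have hT'0 : 0 ≤ T' := Finset.sum_nonneg (fun v _ => le_of_lt (pow_pos hq0 _))
        have hkey : T' ≤ T + w i0 := by
          -- T' * q = T, q = (c-1)/c
          have hqc : q * (c:ℝ) = (c:ℝ) - 1 := by
            rw [hq]; field_simp
          nlinarith [hTq]
        calc ∑ v ∈ A \ I, q ^ f' v
            = ∑ v ∈ A \ S, q ^ f v + T' := hnew
          _ ≤ ∑ v ∈ A \ S, q ^ f v + (T + w i0) := by linarith
          _ = ∑ v ∈ A, q ^ f v := by rw [holdA, holdS, hwI]
          _ < 1 := hsum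
/-- For every graph `G` on `n ≥ 2` vertices with chromatic number `c`,
`χ_P(G) ≤ c ⋅ ⌈log n⌉ + 1`, where `log` is the natural logarithm. -/
theorem chiP_le_chromatic_mul_log [Fintype V] [DecidableEq V] (G : SimpleGraph V)
    (hn : 2 ≤ Fintype.card V) (c : ℕ) (hc : G.chromaticNumber = (c : ℕ∞)) :
    chiP G ≤ c * ⌈Real.log (Fintype.card V)⌉₊ + 1 := by
  set n := Fintype.card V with hnn
  set L := ⌈Real.log n⌉₊ with hL
  set k := c * L + 1 with hk
  have hcol : G.Colorable c :=
    SimpleGraph.chromaticNumber_le_iff_colorable.mp (le_of_eq hc)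
  have hc1 : 1 ≤ c := by
    rcases Nat.eq_zero_or_pos c with h0 | h
    · exfalso
      subst h0
      have hv : Nonempty V := Fintype.card_pos_iff.mp (by omega)
      exact (hcol.some hv.some).elim0
    · exact h
  have hpaint : IsPaintable G k := by
    rcases eq_or_lt_of_le hc1 with h1 | h2
    · -- c = 1 : G has no edges
      have hE : ∀ u v, ¬ G.Adj u v := by
        intro u v hadj
        have col := (h1 ▸ hcol : G.Colorable 1).some
        exact col.valid hadj (Subsingleton.elim _ _)
      refine ⟨Finset.univ.card, edgeless_paintableAux G hE _ _ _ le_rfl ?_⟩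
      intro v _
      omega
    · -- c ≥ 2 : weight argument
      have hc2 : 2 ≤ c := h2
      refine ⟨Finset.univ.card, key_paintableAux G hcol.some hc2 _ _ _ le_rfl ?_⟩
      set q : ℝ := 1 - 1/(c:ℝ) with hq
      have hcr : (2:ℝ) ≤ (c:ℝ) := by exact_mod_cast hc2
      have hq0 : 0 ≤ q := by
        rw [hq]
        have : 1/(c:ℝ) ≤ 1/2 := by
          apply div_le_div_of_nonneg_left <;> linarith
        linarith
      have hq1 : q < 1 := by
        rw [hq]
        have : 0 < 1/(c:ℝ) := by positivity
        linarith
      have hsum : ∑ _v ∈ (Finset.univ : Finset V), q ^ k = (n:ℝ) * q ^ k := by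
        rw [Finset.sum_const, hnn]
        simp [nsmul_eq_mul]
      rw [hsum]
      -- q ≤ exp (-(1/c))
      have hqe : q ≤ Real.exp (-(1/(c:ℝ))) := by
        have := Real.add_one_le_exp (-(1/(c:ℝ)))
        rw [hq]; linarith
      have hqc : q ^ c ≤ Real.exp (-1) := by
        calc q ^ c ≤ Real.exp (-(1/(c:ℝ))) ^ c := pow_le_pow_left₀ hq0 hqe c
          _ = Real.exp ((c:ℝ) * (-(1/(c:ℝ)))) := by rw [← Real.exp_nat_mul]
          _ = Real.exp (-1) := by
              congr 1
              field_simp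
      have hn1 : (1:ℝ) ≤ n := by
        have : (2:ℝ) ≤ (n:ℝ) := by exact_mod_cast hn
        linarith
      have hnpos : (0:ℝ) < n := by linarith
      have hlogL : Real.log n ≤ (L:ℝ) := Nat.le_ceil _
      have hqcL : q ^ (c * L) ≤ 1 / (n:ℝ) := by
        calc q ^ (c * L) = (q ^ c) ^ L := by rw [pow_mul]
          _ ≤ Real.exp (-1) ^ L := pow_le_pow_left₀ (by positivity) hqc L
          _ = Real.exp ((L:ℝ) * (-1)) := by rw [← Real.exp_nat_mul]
          _ ≤ Real.exp (-(Real.log n)) := by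
              apply Real.exp_le_exp.mpr
              linarith
          _ = 1 / (n:ℝ) := by
              rw [Real.exp_neg, Real.exp_log hnpos, one_div]
      calc (n:ℝ) * q ^ k = (n:ℝ) * (q ^ (c * L) * q) := by rw [hk, pow_succ]
        _ ≤ (n:ℝ) * (1/(n:ℝ) * q) := by
            apply mul_le_mul_of_nonneg_left _ (le_of_lt hnpos)
            exact mul_le_mul_of_nonneg_right hqcL hq0
        _ = q := by field_simp
        _ < 1 := hq1
  exact Nat.sInf_le hpaint
end

section
/- Let k₀(n,p) = max{k ∈ ℕ : C(n,k)·(1−p)^{C(k,2)} ≥ n⁴}. For 0 < p ≤ 1 − ε with ε > 0 fixed and np → ∞, the quantity k₀ is well-defined for all sufficiently large n (the set is nonempty and bounded), and k₀(n,p) ≤ 3·log(np)/log(1/(1−p)) for all sufficiently large n. -/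
open Filter

/-- Stirling-type lower bound for factorials: `log k! ≥ k log k − k`. -/
lemma aux_klogk_le (k : ℕ) (hk : 1 ≤ k) :
    (k : ℝ) * Real.log k ≤ (k : ℝ) + Real.log (k.factorial) := by
  have hk0 : (0 : ℝ) < k := by exact_mod_cast hk
  have hf0 : (0 : ℝ) < (k.factorial : ℝ) := by exact_mod_cast k.factorial_pos
  have h1 : (k : ℝ) ^ k ≤ Real.exp k * k.factorial := by
    have := Real.pow_div_factorial_le_exp (x := (k : ℝ)) (le_of_lt hk0) k
    rw [div_le_iff₀ hf0] at this
    linarith [this]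
  have h2 := Real.log_le_log (by positivity) h1
  rw [Real.log_pow, Real.log_mul (Real.exp_ne_zero _) (ne_of_gt hf0),
    Real.log_exp] at h2
  exact h2

set_option maxHeartbeats 1000000

/-- Let `k₀(n,p) = max{k : C(n,k)(1−p)^{C(k,2)} ≥ n⁴}`.  If `0 < p(n) ≤ 1 − ε` with
`ε > 0` fixed and `n⋅p(n) → ∞`, then for all sufficiently large `n` the defining set
is nonempty and bounded (so `k₀` is well defined), and
`k₀(n,p) ≤ 3 log(np)/log(1/(1−p))`. -/
theorem k0_well_defined_and_bound (ε : ℝ) (hε : 0 < ε) (p : ℕ → ℝ)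
    (hp0 : ∀ n, 0 < p n) (hp1 : ∀ n, p n ≤ 1 - ε)
    (hnp : Tendsto (fun n : ℕ => (n : ℝ) * p n) atTop atTop) :
    ∀ᶠ n : ℕ in atTop,
      (let K : Set ℕ := {k | (n : ℝ) ^ 4 ≤ (n.choose k : ℝ) * (1 - p n) ^ k.choose 2}
       K.Nonempty ∧ BddAbove K ∧
        ((sSup K : ℕ) : ℝ) ≤ 3 * Real.log ((n : ℝ) * p n) / Real.log (1 / (1 - p n))) := by
  have hε1 : ε < 1 := by linarith [hp0 0, hp1 0]
  set C₀ : ℝ := max 1 (2 - 3 * Real.log ε - 2 * Real.log 3) with hC₀def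
  have h1 : ∀ᶠ n : ℕ in atTop, Real.exp C₀ ≤ (n : ℝ) * p n :=
    hnp.eventually (eventually_ge_atTop _)
  have h2 : ∀ᶠ n : ℕ in atTop, (3840 / ε ^ 10 : ℝ) ≤ (n : ℝ) :=
    tendsto_natCast_atTop_atTop.eventually (eventually_ge_atTop _)
  have h3 : ∀ᶠ n : ℕ in atTop, 8 ≤ n := eventually_ge_atTop 8
  filter_upwards [h1, h2, h3] with n hLbig hnbig hn8
  intro K
  -- basic facts about the parameters
  set q : ℝ := p n with hqdef
  have hq0 : 0 < q := hp0 n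
  have hq1 : q ≤ 1 - ε := hp1 n
  set b : ℝ := 1 - q with hbdef
  have hb0 : 0 < b := by simp only [hbdef]; linarith
  have hbε : ε ≤ b := by simp only [hbdef]; linarith
  have hb1 : b < 1 := by simp only [hbdef]; linarith
  have hn8' : (8 : ℝ) ≤ (n : ℝ) := by exact_mod_cast hn8
  have hn0 : (0 : ℝ) < n := by linarith
  have hn1 : (1 : ℝ) ≤ (n : ℝ) := by linarith
  have hnq0 : 0 < (n : ℝ) * q := by positivity
  set L : ℝ := Real.log ((n : ℝ) * q) with hLdef
  have hLC : C₀ ≤ L := (Real.le_log_iff_exp_le hnq0).2 hLbig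
  have hL1 : 1 ≤ L := le_trans (le_max_left _ _) hLC
  have hL0 : 0 < L := by linarith
  set c : ℝ := Real.log (1 / b) with hcdef
  have hcb : c = -Real.log b := by rw [hcdef, one_div, Real.log_inv]
  have hc0 : 0 < c := by
    rw [hcb]; simpa using Real.log_neg hb0 hb1
  -- Nonemptiness : k = 5 belongs to K
  have hKne : K.Nonempty := by
    refine ⟨5, ?_⟩
    show (n : ℝ) ^ 4 ≤ (n.choose 5 : ℝ) * b ^ (Nat.choose 5 2)
    have h52 : Nat.choose 5 2 = 10 := by decide
    rw [h52]
    have hd : (n - 4) ^ 5 ≤ 120 * n.choose 5 := by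
      have := Nat.pow_sub_le_descFactorial n 5
      rw [Nat.descFactorial_eq_factorial_mul_choose] at this
      simpa [Nat.factorial] using this
    have hcast : ((n : ℝ) - 4) ^ 5 ≤ 120 * (n.choose 5 : ℝ) := by
      have h4n : 4 ≤ n := by omega
      have : (((n - 4 : ℕ) : ℝ)) = (n : ℝ) - 4 := by
        push_cast [Nat.cast_sub h4n]; ring
      calc ((n : ℝ) - 4) ^ 5 = (((n - 4 : ℕ) : ℝ)) ^ 5 := by rw [this]
        _ ≤ ((120 * n.choose 5 : ℕ) : ℝ) := by exact_mod_cast hd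
        _ = 120 * (n.choose 5 : ℝ) := by push_cast; ring
    have hbpow : ε ^ 10 ≤ b ^ 10 := pow_le_pow_left₀ hε.le hbε 10
    have hnhalf : (n : ℝ) / 2 ≤ (n : ℝ) - 4 := by linarith
    have hchoose_lb : ((n : ℝ) / 2) ^ 5 / 120 ≤ (n.choose 5 : ℝ) := by
      have h1 : ((n : ℝ) / 2) ^ 5 ≤ ((n : ℝ) - 4) ^ 5 :=
        pow_le_pow_left₀ (by positivity) hnhalf 5
      have h2 : ((n : ℝ) / 2) ^ 5 ≤ 120 * (n.choose 5 : ℝ) := le_trans h1 hcast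
      linarith
    have hne10 : (0 : ℝ) < ε ^ 10 := by positivity
    have hnε : 3840 ≤ (n : ℝ) * ε ^ 10 := by
      rw [div_le_iff₀ hne10] at hnbig; linarith
    have key : (n : ℝ) ^ 4 ≤ ((n : ℝ) / 2) ^ 5 / 120 * ε ^ 10 := by
      have : ((n : ℝ) / 2) ^ 5 / 120 * ε ^ 10 = (n : ℝ) ^ 4 * ((n : ℝ) * ε ^ 10 / 3840) := by
        ring
      rw [this]
      nlinarith [pow_pos hn0 4]
    calc (n : ℝ) ^ 4 ≤ ((n : ℝ) / 2) ^ 5 / 120 * ε ^ 10 := key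
      _ ≤ (n.choose 5 : ℝ) * b ^ 10 :=
        mul_le_mul hchoose_lb hbpow (by positivity) (Nat.cast_nonneg _)
  -- Boundedness : K ⊆ [0, n]
  have hKsub : ∀ k ∈ K, k ≤ n := by
    intro k hk
    by_contra hgt
    push_neg at hgt
    have : (n.choose k : ℝ) = 0 := by
      rw [Nat.choose_eq_zero_of_lt hgt]; simp
    have hk' : (n : ℝ) ^ 4 ≤ (n.choose k : ℝ) * b ^ k.choose 2 := hk
    rw [this, zero_mul] at hk'
    nlinarith [pow_pos hn0 4]
  have hKbdd : BddAbove K := ⟨n, fun k hk => hKsub k hk⟩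
  refine ⟨hKne, hKbdd, ?_⟩
  -- The bound on sSup K
  set k : ℕ := sSup K with hkdef
  have hkK : k ∈ K := Nat.sSup_mem hKne hKbdd
  have hkk : (n : ℝ) ^ 4 ≤ (n.choose k : ℝ) * b ^ k.choose 2 := hkK
  have hkn : k ≤ n := hKsub k hkK
  have hk1 : 1 ≤ k := by
    rcases Nat.eq_zero_or_pos k with h0 | hpos
    · exfalso
      rw [h0] at hkk
      simp at hkk
      have h84 : (8 : ℝ) ^ 4 ≤ (n : ℝ) ^ 4 := pow_le_pow_left₀ (by norm_num) hn8' 4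
      norm_num at h84
      linarith
    · exact hpos
  have hk0 : (0 : ℝ) < k := by exact_mod_cast hk1
  have hchoose_pos : (0 : ℝ) < (n.choose k : ℝ) := by
    exact_mod_cast Nat.choose_pos hkn
  have hbpow_pos : (0 : ℝ) < b ^ k.choose 2 := by positivity
  -- take logs of the defining inequality
  have hlog1 : 4 * Real.log n ≤ Real.log (n.choose k : ℝ) + (k.choose 2 : ℝ) * Real.log b := by
    have := Real.log_le_log (by positivity) hkk
    rwa [Real.log_pow, Real.log_mul (ne_of_gt hchoose_pos) (ne_of_gt hbpow_pos),
      Real.log_pow, Nat.cast_ofNat] at this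
  -- log C(n,k) ≤ k log n − log k!
  have hfac_pos : (0 : ℝ) < (k.factorial : ℝ) := by exact_mod_cast k.factorial_pos
  have hchoose_ub : Real.log (n.choose k : ℝ) + Real.log (k.factorial : ℝ)
      ≤ (k : ℝ) * Real.log n := by
    have hnat : k.factorial * n.choose k ≤ n ^ k := by
      have := Nat.descFactorial_le_pow n k
      rw [Nat.descFactorial_eq_factorial_mul_choose] at this
      exact this
    have hcast : (k.factorial : ℝ) * (n.choose k : ℝ) ≤ (n : ℝ) ^ k := by
      exact_mod_cast hnat
    have := Real.log_le_log (by positivity) hcast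
    rwa [Real.log_pow, Real.log_mul (ne_of_gt hfac_pos) (ne_of_gt hchoose_pos),
      add_comm] at this
  have hfac_lb : (k : ℝ) * Real.log k ≤ (k : ℝ) + Real.log (k.factorial) := aux_klogk_le k hk1
  have hc2 : ((k.choose 2 : ℕ) : ℝ) = (k : ℝ) * ((k : ℝ) - 1) / 2 := Nat.cast_choose_two (K := ℝ) k
  -- main inequality (H): k(k-1)/2 * c ≤ k log n − k log k + k − 4 log n
  have hlogb : Real.log b = -c := by rw [hcb]; ring
  have hH : (k : ℝ) * ((k : ℝ) - 1) / 2 * c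
      ≤ (k : ℝ) * Real.log n - (k : ℝ) * Real.log k + (k : ℝ) - 4 * Real.log n := by
    rw [hc2, hlogb] at hlog1
    linarith [hchoose_ub, hfac_lb, hlog1]
  have hlogn_nonneg : 0 ≤ Real.log n := Real.log_nonneg hn1
  -- divide by k : (k−1)/2 * c ≤ log n − log k + 1
  have hstep : ((k : ℝ) - 1) / 2 * c ≤ Real.log n - Real.log k + 1 := by
    have hmul : (k : ℝ) * (((k : ℝ) - 1) / 2 * c) ≤ (k : ℝ) * (Real.log n - Real.log k + 1) := by
      nlinarith [hH, hlogn_nonneg]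
    exact le_of_mul_le_mul_left hmul hk0
  -- now the contradiction argument
  show ((k : ℕ) : ℝ) ≤ 3 * L / c
  by_contra hcon
  push_neg at hcon
  have h3L : 3 * L < (k : ℝ) * c := by
    rw [div_lt_iff₀ hc0] at hcon
    nlinarith
  -- c ≤ q / ε and c ≤ -log ε
  have hc_le : c ≤ q / ε := by
    have h1 : c ≤ 1 / b - 1 := by
      rw [hcdef]
      exact Real.log_le_sub_one_of_pos (by positivity)
    have h2 : 1 / b - 1 = q / b := by
      field_simp
      rw [hbdef]; ring
    have h3 : q / b ≤ q / ε := by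
      apply div_le_div_of_nonneg_left hq0.le hε hbε
    linarith
  have hc_le2 : c ≤ -Real.log ε := by
    rw [hcb]
    have := Real.log_le_log hε hbε
    linarith
  -- lower bound on k : k ≥ 3 L ε / q
  have hkLB : 3 * L * ε / q ≤ (k : ℝ) := by
    rw [div_le_iff₀ hq0]
    have h1 : (k : ℝ) * c ≤ (k : ℝ) * (q / ε) :=
      mul_le_mul_of_nonneg_left hc_le (le_of_lt hk0)
    have h2 : 3 * L < (k : ℝ) * q / ε := by
      rw [← mul_div_assoc] at h1
      linarith
    rw [lt_div_iff₀ hε] at h2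
    linarith
  have hlbpos : (0 : ℝ) < 3 * L * ε / q := by positivity
  have hlogk : Real.log 3 + Real.log L + Real.log ε - Real.log q ≤ Real.log k := by
    have h1 := Real.log_le_log hlbpos hkLB
    have h2 : Real.log (3 * L * ε / q) =
        Real.log 3 + Real.log L + Real.log ε - Real.log q := by
      rw [Real.log_div (by positivity) (ne_of_gt hq0),
        Real.log_mul (by positivity) (ne_of_gt hε),
        Real.log_mul (by norm_num) (ne_of_gt hL0)]
    linarith [h1, h2.symm.le]
  -- L = log n + log q
  have hLsplit : L = Real.log n + Real.log q := by
    rw [hLdef, Real.log_mul (ne_of_gt hn0) (ne_of_gt hq0)]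
  have hlogL0 : 0 ≤ Real.log L := Real.log_nonneg hL1
  have hLC0 : 2 - 3 * Real.log ε - 2 * Real.log 3 ≤ L :=
    le_trans (le_max_right _ _) hLC
  -- assemble everything
  have hkc : (k : ℝ) * c ≤ c + 2 * Real.log n - 2 * Real.log k + 2 := by nlinarith [hstep]
  linarith [h3L, hkc, hlogk, hlogL0, hLC0, hc_le2, hLsplit]
end
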